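/- Let λ be an antidominant composition. Then every non-attacking filling σ of dg'(λ) satisfies coinv(σ̂) ≥ 0. -/

import Mathlib

open Finset

namespace CO

/-- The column diagram `dg'(λ)` of a composition, as a finset of boxes `(i, j)`,
`1 ≤ i ≤ n`, `1 ≤ j ≤ λ_i`. -/
def dgF (n : ℕ) (lam : ℕ → ℕ) : Finset (ℕ × ℕ) :=
  (Finset.Icc 1 n).biUnion fun i => (Finset.Icc 1 (lam i)).image fun j => (i, j)

/-- The augmented diagram `d̂g(λ)`: one extra box `(i, 0)` below each column. -/
def augF (n : ℕ) (lam : ℕ → ℕ) : Finset (ℕ × ℕ) :=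
  dgF n lam ∪ (Finset.Icc 1 n).image fun i => (i, 0)

/-- The box `d(u)` directly below a box. -/
def dbox (u : ℕ × ℕ) : ℕ × ℕ := (u.1, u.2 - 1)

/-- The augmented filling `σ̂`: equal to `σ` on positive rows and to `i` on `(i, 0)`. -/
def aug (σ : ℕ × ℕ → ℕ) (u : ℕ × ℕ) : ℕ := if u.2 = 0 then u.1 else σ u

/-- A filling takes values in `{1, …, n}` on the diagram. -/
def IsFilling (n : ℕ) (lam : ℕ → ℕ) (σ : ℕ × ℕ → ℕ) : Prop :=
  ∀ u ∈ dgF n lam, 1 ≤ σ u ∧ σ u ≤ n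

/-- Attacking boxes: same row, or consecutive rows with the lower box to the right. -/
def Attack (u v : ℕ × ℕ) : Prop :=
  u ≠ v ∧ (u.2 = v.2 ∨ (u.2 = v.2 + 1 ∧ u.1 < v.1) ∨ (v.2 = u.2 + 1 ∧ v.1 < u.1))

/-- A non-attacking filling: `σ̂` takes distinct values on attacking pairs of the
augmented diagram. -/
def NonAttacking (n : ℕ) (lam : ℕ → ℕ) (σ : ℕ × ℕ → ℕ) : Prop :=
  ∀ u ∈ augF n lam, ∀ v ∈ augF n lam, Attack u v → aug σ u ≠ aug σ v

/-- The arm of a box `u`. -/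
def armF (n : ℕ) (lam : ℕ → ℕ) (u : ℕ × ℕ) : Finset (ℕ × ℕ) :=
  ((dgF n lam).filter fun v => v.1 < u.1 ∧ v.2 = u.2 ∧ lam v.1 ≤ lam u.1) ∪
    ((augF n lam).filter fun v => u.1 < v.1 ∧ v.2 + 1 = u.2 ∧ lam v.1 < lam u.1)

/-- `a(u) = |arm(u)|`. -/
def armCard (n : ℕ) (lam : ℕ → ℕ) (u : ℕ × ℕ) : ℕ := (armF n lam u).card

/-- The number of inversions of `σ̂`: attacking pairs `u, u'` with `σ̂(u) < σ̂(u')`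
and (same row with `u` to the left, or `u'` one row above `u` strictly to the left). -/
def invCard (n : ℕ) (lam : ℕ → ℕ) (σ : ℕ × ℕ → ℕ) : ℕ :=
  ((augF n lam ×ˢ augF n lam).filter fun p =>
    aug σ p.1 < aug σ p.2 ∧
      ((p.1.2 = p.2.2 ∧ p.1.1 < p.2.1) ∨ (p.2.2 = p.1.2 + 1 ∧ p.2.1 < p.1.1))).card

/-- The descent set of `σ̂`. -/
def desF (n : ℕ) (lam : ℕ → ℕ) (σ : ℕ × ℕ → ℕ) : Finset (ℕ × ℕ) :=
  (dgF n lam).filter fun u => aug σ (dbox u) < aug σ u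

/-- The statistic `coinv(σ̂)` (as an integer). -/
def coinv (n : ℕ) (lam : ℕ → ℕ) (σ : ℕ × ℕ → ℕ) : ℤ :=
  (∑ u ∈ dgF n lam, (armCard n lam u : ℤ)) - invCard n lam σ +
    (((Finset.Icc 1 n ×ˢ Finset.Icc 1 n).filter fun p =>
      p.1 < p.2 ∧ lam p.1 ≤ lam p.2).card : ℤ) +
    ∑ u ∈ desF n lam σ, (armCard n lam u : ℤ)

/-- The statistic `T(σ)`. -/
def Tstat (n : ℕ) (lam : ℕ → ℕ) (σ : ℕ × ℕ → ℕ) : ℤ :=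
  coinv n lam σ -
    ∑ u ∈ (dgF n lam).filter fun u => aug σ u ≠ aug σ (dbox u), (armCard n lam u : ℤ)

/-- Antidominant composition: `λ_1 ≤ ⋯ ≤ λ_n`. -/
def Antidominant (n : ℕ) (lam : ℕ → ℕ) : Prop :=
  ∀ i j, 1 ≤ i → i ≤ j → j ≤ n → lam i ≤ lam j

/-- Appropriate filling: non-attacking with `T(σ) = 0`. -/
def Appropriate (n : ℕ) (lam : ℕ → ℕ) (σ : ℕ × ℕ → ℕ) : Prop :=
  IsFilling n lam σ ∧ NonAttacking n lam σ ∧ Tstat n lam σ = 0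

/-- The operation `π` on compositions: `π(λ) = (λ_n + 1, λ_1, …, λ_{n-1})`. -/
def piComp (n : ℕ) (lam : ℕ → ℕ) : ℕ → ℕ :=
  fun i => if i = 1 then lam n + 1 else lam (i - 1)

/-- The operation `π` on boxes. -/
def piBox (n : ℕ) (u : ℕ × ℕ) : ℕ × ℕ :=
  if u.1 < n then (u.1 + 1, u.2) else (1, u.2 + 1)

/-- Extension by zero of a function defined on the diagram. -/
def ext (n : ℕ) (lam : ℕ → ℕ) (f : {u // u ∈ dgF n lam} → ℕ) : ℕ × ℕ → ℕ :=
  fun u => if h : u ∈ dgF n lam then f ⟨u, h⟩ else 0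

/-- `qstat(σ) = Σ (l(u) + 1)` over boxes `u` with `σ̂(u) < σ̂(d(u))`. -/
def qstat (n : ℕ) (lam : ℕ → ℕ) (σ : ℕ × ℕ → ℕ) : ℕ :=
  ∑ u ∈ (dgF n lam).filter fun u => aug σ u < aug σ (dbox u), (lam u.1 - u.2 + 1)

end CO

namespace CO

lemma mem_dgF {n : ℕ} {lam : ℕ → ℕ} {u : ℕ × ℕ} :
    u ∈ dgF n lam ↔ (1 ≤ u.1 ∧ u.1 ≤ n) ∧ 1 ≤ u.2 ∧ u.2 ≤ lam u.1 := by
  obtain ⟨i, j⟩ := u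
  simp only [dgF, mem_biUnion, mem_image, mem_Icc, Prod.mk.injEq]
  constructor
  · rintro ⟨i', hi', j', hj', rfl, rfl⟩; exact ⟨hi', hj'⟩
  · rintro ⟨hi, hj⟩; exact ⟨i, hi, j, hj, rfl, rfl⟩

lemma mem_augF {n : ℕ} {lam : ℕ → ℕ} {u : ℕ × ℕ} :
    u ∈ augF n lam ↔ u ∈ dgF n lam ∨ ((1 ≤ u.1 ∧ u.1 ≤ n) ∧ u.2 = 0) := by
  obtain ⟨i, j⟩ := u
  simp only [augF, mem_union, mem_image, mem_Icc, Prod.mk.injEq]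
  constructor
  · rintro (h | ⟨i', hi', rfl, rfl⟩)
    · exact Or.inl h
    · exact Or.inr ⟨hi', rfl⟩
  · rintro (h | ⟨hi, rfl⟩)
    · exact Or.inl h
    · exact Or.inr ⟨i, hi, rfl, rfl⟩

lemma col_bounds_of_augF {n : ℕ} {lam : ℕ → ℕ} {u : ℕ × ℕ} (h : u ∈ augF n lam) :
    1 ≤ u.1 ∧ u.1 ≤ n := by
  rcases mem_augF.mp h with h | h
  · exact (mem_dgF.mp h).1
  · exact h.1

lemma mem_dgF_of_augF {n : ℕ} {lam : ℕ → ℕ} {u : ℕ × ℕ} (h : u ∈ augF n lam)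
    (h2 : 1 ≤ u.2) : u ∈ dgF n lam := by
  rcases mem_augF.mp h with h | h
  · exact h
  · omega

lemma dgF_subset_augF {n : ℕ} {lam : ℕ → ℕ} : dgF n lam ⊆ augF n lam :=
  Finset.subset_union_left

lemma inv_le (n : ℕ) (lam : ℕ → ℕ) (hanti : Antidominant n lam)
    (σ : ℕ × ℕ → ℕ) (hna : NonAttacking n lam σ) :
    invCard n lam σ ≤
      ((Finset.Icc 1 n ×ˢ Finset.Icc 1 n).filter fun p =>
        p.1 < p.2 ∧ lam p.1 ≤ lam p.2).card
      + ((∑ u ∈ dgF n lam, armCard n lam u)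
      + ∑ u ∈ desF n lam σ, armCard n lam u) := by
  classical
  set Cset := ((Finset.Icc 1 n ×ˢ Finset.Icc 1 n).filter fun p : ℕ × ℕ =>
        p.1 < p.2 ∧ lam p.1 ≤ lam p.2) with hCset
  set T0 : Finset ((ℕ × ℕ) × ℕ × Bool) :=
    Cset.image fun p => ((p.2, (0 : ℕ)), p.1, false) with hT0
  set A1 : Finset ((ℕ × ℕ) × ℕ × Bool) :=
    (dgF n lam).biUnion fun u => (armF n lam u).image fun v => (u, v.1, false) with hA1
  set A2 : Finset ((ℕ × ℕ) × ℕ × Bool) :=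
    (desF n lam σ).biUnion fun u => (armF n lam u).image fun v => (u, v.1, true) with hA2
  set T : Finset ((ℕ × ℕ) × ℕ × Bool) := T0 ∪ (A1 ∪ A2) with hT
  set f : (ℕ × ℕ) × (ℕ × ℕ) → (ℕ × ℕ) × ℕ × Bool := fun p =>
    if p.1.2 = p.2.2 then ((p.2.1, p.1.2), p.1.1, false)
    else ((p.1.1, p.2.2), p.2.1, !decide (aug σ (p.1.1, p.2.2) < aug σ p.2)) with hf
  have key : invCard n lam σ ≤ T.card := by
    apply Finset.card_le_card_of_injOn f
    · -- maps to
      intro p hp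
      simp only [mem_coe, mem_filter, mem_product] at hp ⊢
      obtain ⟨⟨hu, hv⟩, hlt, hor⟩ := hp
      by_cases hrow : p.1.2 = p.2.2
      · -- same row
        have hij : p.1.1 < p.2.1 := by
          rcases hor with ⟨_, h⟩ | ⟨h, _⟩
          · exact h
          · omega
        have hfp : f p = ((p.2.1, p.1.2), p.1.1, false) := by
          simp [hf, hrow]
        by_cases h0 : p.1.2 = 0
        · -- row 0 : lands in T0
          have hu1 := col_bounds_of_augF hu
          have hv1 := col_bounds_of_augF hv
          have : ((p.2.1, p.1.2), p.1.1, false) ∈ T0 := by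
            rw [hT0]
            apply Finset.mem_image.mpr
            refine ⟨(p.1.1, p.2.1), ?_, by simp [h0]⟩
            simp only [hCset, mem_filter, mem_product, mem_Icc]
            exact ⟨⟨⟨hu1.1, hu1.2⟩, ⟨hv1.1, hv1.2⟩⟩, hij,
              hanti _ _ hu1.1 hij.le hv1.2⟩
          rw [hfp, hT]; exact Finset.mem_union_left _ this
        · -- positive row : lands in A1
          have hud : p.1 ∈ dgF n lam := mem_dgF_of_augF hu (by omega)
          have hvd : p.2 ∈ dgF n lam := mem_dgF_of_augF hv (by omega; )
          have hub := mem_dgF.mp hud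
          have hvb := mem_dgF.mp hvd
          have harm : p.1 ∈ armF n lam p.2 := by
            apply Finset.mem_union_left
            exact Finset.mem_filter.mpr ⟨hud, hij, hrow,
              hanti _ _ hub.1.1 hij.le hvb.1.2⟩
          have : ((p.2.1, p.1.2), p.1.1, false) ∈ A1 := by
            rw [hA1]
            apply Finset.mem_biUnion.mpr
            refine ⟨p.2, hvd, Finset.mem_image.mpr ⟨p.1, harm, ?_⟩⟩
            simp [hrow]
          rw [hfp, hT]; exact Finset.mem_union_right _ (Finset.mem_union_left _ this)
      · -- diagonal
        have hdiag : p.2.2 = p.1.2 + 1 ∧ p.2.1 < p.1.1 := by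
          rcases hor with ⟨h, _⟩ | h
          · exact absurd h hrow
          · exact h
        obtain ⟨hk, hij⟩ := hdiag
        have hvd : p.2 ∈ dgF n lam := mem_dgF_of_augF hv (by omega)
        have hvb := mem_dgF.mp hvd
        have hu1 := col_bounds_of_augF hu
        set w : ℕ × ℕ := (p.1.1, p.2.2) with hw
        have hlamij : lam p.2.1 ≤ lam p.1.1 := hanti _ _ hvb.1.1 hij.le hu1.2
        have hwd : w ∈ dgF n lam := by
          rw [mem_dgF]
          exact ⟨⟨hu1.1, hu1.2⟩, hvb.2.1, le_trans hvb.2.2 hlamij⟩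
        have harm : p.2 ∈ armF n lam w := by
          apply Finset.mem_union_left
          exact Finset.mem_filter.mpr ⟨hvd, hij, rfl, hlamij⟩
        have hne : aug σ w ≠ aug σ p.2 := by
          apply hna w (dgF_subset_augF hwd) p.2 hv
          refine ⟨?_, Or.inl rfl⟩
          intro h
          rw [← h] at hij
          exact lt_irrefl _ hij
        by_cases hb : aug σ w < aug σ p.2
        · have hfp : f p = (w, p.2.1, false) := by simp [hf, hrow, hb, ← hw]
          have : (w, p.2.1, false) ∈ A1 := by
            rw [hA1]
            exact Finset.mem_biUnion.mpr ⟨w, hwd,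
              Finset.mem_image.mpr ⟨p.2, harm, rfl⟩⟩
          rw [hfp, hT]
          exact Finset.mem_union_right _ (Finset.mem_union_left _ this)
        · have hfp : f p = (w, p.2.1, true) := by simp [hf, hrow, hb, ← hw]
          have hlt2 : aug σ p.2 < aug σ w := lt_of_le_of_ne (not_lt.mp hb) hne.symm
          have hdes : w ∈ desF n lam σ := by
            rw [desF, Finset.mem_filter]
            refine ⟨hwd, ?_⟩
            have hdb : dbox w = p.1 := by
              rw [dbox, hw]
              ext <;> simp <;> omega
            rw [hdb]
            exact lt_trans hlt hlt2
          have : (w, p.2.1, true) ∈ A2 := by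
            rw [hA2]
            exact Finset.mem_biUnion.mpr ⟨w, hdes,
              Finset.mem_image.mpr ⟨p.2, harm, rfl⟩⟩
          rw [hfp, hT]
          exact Finset.mem_union_right _ (Finset.mem_union_right _ this)
    · -- injective
      intro p hp q hq hfeq
      simp only [mem_coe, mem_filter, mem_product] at hp hq
      obtain ⟨⟨hpu, hpv⟩, hplt, hpor⟩ := hp
      obtain ⟨⟨hqu, hqv⟩, hqlt, hqor⟩ := hq
      by_cases hprow : p.1.2 = p.2.2 <;> by_cases hqrow : q.1.2 = q.2.2
      · simp only [hf] at hfeq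
        rw [if_pos hprow, if_pos hqrow] at hfeq
        simp only [Prod.mk.injEq] at hfeq
        obtain ⟨⟨h1, h2⟩, h3, -⟩ := hfeq
        ext <;> omega
      · -- p same row, q diagonal
        exfalso
        have hqd : q.2.2 = q.1.2 + 1 ∧ q.2.1 < q.1.1 := by
          rcases hqor with ⟨h, _⟩ | h
          · exact absurd h hqrow
          · exact h
        simp only [hf] at hfeq
        rw [if_pos hprow, if_neg hqrow] at hfeq
        simp only [Prod.mk.injEq] at hfeq
        obtain ⟨⟨h1, h2⟩, h3, h4⟩ := hfeq
        -- booleans : false = !decide(...)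
        have hb : aug σ (q.1.1, q.2.2) < aug σ q.2 := by
          by_contra hc
          simp [hc] at h4
        -- p.1 = q.2, p.2 = (q.1.1, q.2.2)
        have hp1 : p.1 = q.2 := by ext <;> simp [h3, h2]
        have hp2 : p.2 = (q.1.1, q.2.2) := by
          ext
          · exact h1
          · simp [← hprow, h2]
        rw [hp1, hp2] at hplt
        exact lt_asymm hplt hb
      · -- p diagonal, q same row
        exfalso
        have hpd : p.2.2 = p.1.2 + 1 ∧ p.2.1 < p.1.1 := by
          rcases hpor with ⟨h, _⟩ | h
          · exact absurd h hprow
          · exact h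
        simp only [hf] at hfeq
        rw [if_neg hprow, if_pos hqrow] at hfeq
        simp only [Prod.mk.injEq] at hfeq
        obtain ⟨⟨h1, h2⟩, h3, h4⟩ := hfeq
        have hb : aug σ (p.1.1, p.2.2) < aug σ p.2 := by
          by_contra hc
          simp [hc] at h4
        have hq1 : q.1 = p.2 := by ext <;> simp [← h3, ← h2]
        have hq2 : q.2 = (p.1.1, p.2.2) := by
          ext
          · exact h1.symm
          · simp [← hqrow, ← h2]
        rw [hq1, hq2] at hqlt
        exact lt_asymm hqlt hb
      · -- both diagonal
        have hpd : p.2.2 = p.1.2 + 1 ∧ p.2.1 < p.1.1 := by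
          rcases hpor with ⟨h, _⟩ | h
          · exact absurd h hprow
          · exact h
        have hqd : q.2.2 = q.1.2 + 1 ∧ q.2.1 < q.1.1 := by
          rcases hqor with ⟨h, _⟩ | h
          · exact absurd h hqrow
          · exact h
        simp only [hf] at hfeq
        rw [if_neg hprow, if_neg hqrow] at hfeq
        simp only [Prod.mk.injEq] at hfeq
        obtain ⟨⟨h1, h2⟩, h3, -⟩ := hfeq
        ext <;> omega
  refine le_trans key ?_
  rw [hT]
  refine le_trans (Finset.card_union_le _ _) ?_
  gcongr
  · exact Finset.card_image_le
  refine le_trans (Finset.card_union_le _ _) ?_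
  gcongr
  · exact le_trans (Finset.card_biUnion_le)
      (Finset.sum_le_sum fun u _ => Finset.card_image_le)
  · exact le_trans (Finset.card_biUnion_le)
      (Finset.sum_le_sum fun u _ => Finset.card_image_le)


end CO

open CO in
/-- For an antidominant composition `λ`, every non-attacking
filling `σ` of `dg'(λ)` satisfies `coinv(σ̂) ≥ 0`. -/
theorem coinv_nonneg (n : ℕ) (hn : 1 ≤ n) (lam : ℕ → ℕ) (hanti : Antidominant n lam)
    (σ : ℕ × ℕ → ℕ) (hfill : IsFilling n lam σ) (hna : NonAttacking n lam σ) :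
    0 ≤ coinv n lam σ := by
  
  have h := inv_le n lam hanti σ hna
  rw [coinv]
  have h' : (invCard n lam σ : ℤ) ≤
      (((Finset.Icc 1 n ×ˢ Finset.Icc 1 n).filter fun p =>
        p.1 < p.2 ∧ lam p.1 ≤ lam p.2).card : ℤ)
      + ((∑ u ∈ dgF n lam, (armCard n lam u : ℤ))
      + ∑ u ∈ desF n lam σ, (armCard n lam u : ℤ)) := by
    exact_mod_cast h
  linarith
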